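/- In the setting of the AdiaConvert construction, assume additionally W ≥ ε/2, and define P_x(s,ε) = |ψ_x^+(s,ε)⟩⟨ψ_x^+(s,ε)| and X_x(s,ε) = (π/(2N_x(ε)))·|Ψ_x^−(s,ε)⟩⟨ψ_x^+(s,ε)|. Then for every x ∈ 𝕏 and s ∈ [0,1]: (i) ‖X_x(s,ε)‖ ≤ (π√5/2)·(W/ε), and (ii) ‖(∂_s X_x(s,ε))·P_x(s,ε)‖ ≤ (π²/√2)·(W/ε), where ‖·‖ is the operator norm. -/

import Mathlib

noncomputable section
open scoped ComplexConjugate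

namespace AdiaConvert

/-- Index type of the Hilbert space `H = H_O ⊕ (ℂⁿ ⊗ ℂ^{Σ∪{0̄}} ⊗ H_W)`, where
`H_O = ℂ² ⊗ H'`, `H' = ℂ^V`, `H_W = ℂ^W`, and the blank symbol `0̄` is `Option.none`. -/
abbrev Idx (Al V W : Type*) (n : ℕ) : Type _ := (Fin 2 × V) ⊕ (Fin n × Option Al × W)

/-- The Hilbert space of the AdiaConvert algorithm. -/
abbrev Hsp (Al V W : Type*) (n : ℕ) : Type _ := EuclideanSpace ℂ (Idx Al V W n)

/-- Build a vector of `Hsp` from its coordinates. -/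
def mk {Al V W : Type*} {n : ℕ} (f : Idx Al V W n → ℂ) : Hsp Al V W n :=
  (WithLp.equiv 2 _).symm f

variable {Al V W X : Type*} {n : ℕ}

/-- `θ(s) = πs/2`. -/
def θ (s : ℝ) : ℝ := Real.pi * s / 2

/-- `ξ(s) = 2 cos θ(s) sin θ(s)`. -/
def ξ (s : ℝ) : ℝ := 2 * Real.cos (θ s) * Real.sin (θ s)

/-- The coordinates of `|y⁺⟩ = (|0̄⟩ + |y⟩)/√2`. -/
def gP [DecidableEq Al] (y : Al) : Option Al → ℂ := fun a =>
  if a = none then (Real.sqrt 2 : ℂ)⁻¹ else if a = some y then (Real.sqrt 2 : ℂ)⁻¹ else 0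

/-- The coordinates of `|y⁻⟩ = (|0̄⟩ - |y⟩)/√2`. -/
def gM [DecidableEq Al] (y : Al) : Option Al → ℂ := fun a =>
  if a = none then (Real.sqrt 2 : ℂ)⁻¹ else if a = some y then -(Real.sqrt 2 : ℂ)⁻¹ else 0

/-- `|k_x⁺(s)⟩ = cos θ(s) |0,ρ_x⟩ + sin θ(s) |1,σ_x⟩` (embedded in `H`). -/
def kP (ρv σv : X → EuclideanSpace ℂ V) (s : ℝ) (x : X) : Hsp Al V W n :=
  mk fun q => match q with
  | .inl (b, i) => if b = 0 then (Real.cos (θ s) : ℂ) * ρv x i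
                   else (Real.sin (θ s) : ℂ) * σv x i
  | .inr _ => 0

/-- `|k_x⁻(s)⟩ = -sin θ(s) |0,ρ_x⟩ + cos θ(s) |1,σ_x⟩` (embedded in `H`). -/
def kM (ρv σv : X → EuclideanSpace ℂ V) (s : ℝ) (x : X) : Hsp Al V W n :=
  mk fun q => match q with
  | .inl (b, i) => if b = 0 then -(Real.sin (θ s) : ℂ) * ρv x i
                   else (Real.cos (θ s) : ℂ) * σv x i
  | .inr _ => 0

/-- `∑ᵢ |i⟩ ⊗ |x_i^±⟩ ⊗ |c_{x,i}⟩` (embedded in `H`), where the `ℂ^{Σ∪{0̄}}` part has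
coordinates `g (x_i)`. -/
def qPart (g : Al → Option Al → ℂ) (inp : X → Fin n → Al)
    (c : X → Fin n → EuclideanSpace ℂ W) (x : X) : Hsp Al V W n :=
  mk fun q => match q with
  | .inl _ => 0
  | .inr (i, a, w) => g (inp x i) a * c x i w

/-- The non-normalized state `|Ψ_x⁺(s,ε)⟩`. -/
def PsiP [DecidableEq Al] (ρv σv : X → EuclideanSpace ℂ V) (inp : X → Fin n → Al)
    (u : X → Fin n → EuclideanSpace ℂ W) (Wr s ε : ℝ) (x : X) : Hsp Al V W n :=
  kP ρv σv s x + ((ε / Real.sqrt Wr : ℝ) : ℂ) • qPart gP inp u x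

/-- The non-normalized state `|Ψ_x⁻(s,ε)⟩`. -/
def PsiM [DecidableEq Al] (ρv σv : X → EuclideanSpace ℂ V) (inp : X → Fin n → Al)
    (v : X → Fin n → EuclideanSpace ℂ W) (Wr s ε : ℝ) (x : X) : Hsp Al V W n :=
  kM ρv σv s x + ((ξ s * (Real.sqrt Wr / ε) : ℝ) : ℂ) • qPart gM inp v x

/-- The normalized state `|ψ_x⁺(s,ε)⟩`. -/
def psiP [Fintype Al] [Fintype V] [Fintype W] [DecidableEq Al] (ρv σv : X → EuclideanSpace ℂ V) (inp : X → Fin n → Al)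
    (u : X → Fin n → EuclideanSpace ℂ W) (Wr s ε : ℝ) (x : X) : Hsp Al V W n :=
  ‖PsiP ρv σv inp u Wr s ε x‖⁻¹ • PsiP ρv σv inp u Wr s ε x

/-- The rank-one operator `|a⟩⟨b| : v ↦ ⟨b|v⟩·a`. -/
def ketbra [Fintype Al] [Fintype V] [Fintype W]
    (a b : Hsp Al V W n) : Hsp Al V W n →L[ℂ] Hsp Al V W n :=
  (innerSL ℂ b).smulRight a

/-- The orthogonal projection `Λ(s,ε)` onto `span{|Ψ_x⁻(s,ε)⟩ : x ∈ 𝕏}`. -/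
def Lam [Fintype Al] [Fintype V] [Fintype W] [DecidableEq Al]
    (ρv σv : X → EuclideanSpace ℂ V) (inp : X → Fin n → Al)
    (v : X → Fin n → EuclideanSpace ℂ W) (Wr s ε : ℝ) :
    Hsp Al V W n →L[ℂ] Hsp Al V W n :=
  (Submodule.span ℂ (Set.range fun x : X => PsiM ρv σv inp v Wr s ε x)).subtypeL.comp
    (Submodule.orthogonalProjectionOnto
      (Submodule.span ℂ (Set.range fun x : X => PsiM ρv σv inp v Wr s ε x)))

/-- The matrix of the oracle Hamiltonian `Π_x = ∑ᵢ |i⟩⟨i| ⊗ |x_i⁻⟩⟨x_i⁻| ⊗ I_W`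
(acting as `0` on `H_O`). -/
def PiMat [DecidableEq Al] [DecidableEq W] (inp : X → Fin n → Al) (x : X) :
    Matrix (Idx Al V W n) (Idx Al V W n) ℂ :=
  fun q q' => match q, q' with
  | .inr (i, a, w), .inr (i', a', w') =>
      if i = i' ∧ w = w' then gM (inp x i) a * conj (gM (inp x i) a') else 0
  | _, _ => 0

/-- The oracle Hamiltonian `Π_x` as an operator on `H`. -/
def PiC [Fintype Al] [Fintype V] [Fintype W]
    [DecidableEq Al] [DecidableEq V] [DecidableEq W]
    (inp : X → Fin n → Al) (x : X) : Hsp Al V W n →L[ℂ] Hsp Al V W n :=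
  Matrix.toEuclideanCLM (𝕜 := ℂ) (PiMat inp x)

/-- The total Hamiltonian `H_x(s,ε) = Λ(s,ε) − Π_x`. -/
def Hx [Fintype Al] [Fintype V] [Fintype W]
    [DecidableEq Al] [DecidableEq V] [DecidableEq W]
    (ρv σv : X → EuclideanSpace ℂ V) (inp : X → Fin n → Al)
    (v : X → Fin n → EuclideanSpace ℂ W) (Wr s ε : ℝ) (x : X) :
    Hsp Al V W n →L[ℂ] Hsp Al V W n :=
  Lam ρv σv inp v Wr s ε - PiC inp x

/-- The projection `P_x(s,ε) = |ψ_x⁺(s,ε)⟩⟨ψ_x⁺(s,ε)|`. -/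
def Pproj [Fintype Al] [Fintype V] [Fintype W] [DecidableEq Al]
    (ρv σv : X → EuclideanSpace ℂ V) (inp : X → Fin n → Al)
    (u : X → Fin n → EuclideanSpace ℂ W) (Wr s ε : ℝ) (x : X) :
    Hsp Al V W n →L[ℂ] Hsp Al V W n :=
  ketbra (psiP ρv σv inp u Wr s ε x) (psiP ρv σv inp u Wr s ε x)

/-- The operator `X_x(s,ε) = (π/(2N_x(ε))) |Ψ_x⁻(s,ε)⟩⟨ψ_x⁺(s,ε)|`. -/
def Xx [Fintype Al] [Fintype V] [Fintype W] [DecidableEq Al]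
    (ρv σv : X → EuclideanSpace ℂ V) (inp : X → Fin n → Al)
    (u v : X → Fin n → EuclideanSpace ℂ W) (Wr s ε : ℝ) (x : X) :
    Hsp Al V W n →L[ℂ] Hsp Al V W n :=
  ((Real.pi / (2 * ‖PsiP ρv σv inp u Wr s ε x‖) : ℝ) : ℂ) •
    ketbra (PsiM ρv σv inp v Wr s ε x) (psiP ρv σv inp u Wr s ε x)

end AdiaConvert

open AdiaConvert

/-!
On `H_O` the states `|k_x^±(s)⟩` are a rotating orthonormal pair, orthogonal to the work-space
parts `∑ᵢ |i⟩|x_i^±⟩|·⟩`. Hence `N_x(ε) = ‖Ψ_x⁺(s,ε)‖ ≥ 1` does not depend on `s`, and Pythagoras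
together with `ξ(s)² ≤ 1`, `Σᵢ ‖v_{x,i}‖² ≤ W` and `W/ε ≥ 1/2` gives `‖Ψ_x⁻‖ ≤ √5·W/ε` and
`‖∂ₛΨ_x⁻‖ ≤ √2·π·W/ε`. This yields (i) since `‖|a⟩⟨b|‖ = ‖a‖‖b‖`. For (ii), the product rule
gives `∂ₛX_x = (π/2N_x)(|Ψ_x⁻⟩⟨∂ₛψ_x⁺| + |∂ₛΨ_x⁻⟩⟨ψ_x⁺|)`, and `∂ₛψ_x⁺ ∝ |k_x⁻⟩ ⟂ ψ_x⁺`, so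
the first term is killed by `P_x`.
-/

open InnerProductSpace

section ComplexInnerProductSpace

variable {E F : Type*} [NormedAddCommGroup E] [InnerProductSpace ℂ E]
  [NormedAddCommGroup F] [InnerProductSpace ℂ F]

theorem isBoundedBilinearMap_rankOne :
    IsBoundedBilinearMap ℝ fun p : E × F => rankOne ℂ p.1 p.2 where
  add_left a₁ a₂ b := by simp
  smul_left r a b := by simp [← Complex.coe_smul]
  add_right a b₁ b₂ := by simp
  smul_right r a b := by simp [← Complex.coe_smul]
  bound := ⟨1, one_pos, fun a b => by simp⟩

theorem HasDerivAt.rankOne {A : ℝ → E} {B : ℝ → F} {A' : E} {B' : F} {t : ℝ}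
    (hA : HasDerivAt A A' t) (hB : HasDerivAt B B' t) :
    HasDerivAt (fun r => rankOne ℂ (A r) (B r))
      (rankOne ℂ (A t) B' + rankOne ℂ A' (B t)) t := by
  have := (isBoundedBilinearMap_rankOne.hasFDerivAt (A t, B t)).comp_hasDerivAt t (hA.prodMk hB)
  rwa [IsBoundedBilinearMap.deriv_apply] at this

theorem rankOne_add_rankOne_comp_rankOne_self {a a' : E} {b b' : F} (hb : ‖b‖ = 1)
    (hb' : inner ℂ b' b = 0) :
    (rankOne ℂ a b' + rankOne ℂ a' b).comp (rankOne ℂ b b) = rankOne ℂ a' b := by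
  simp [ContinuousLinearMap.add_comp, rankOne_comp_rankOne, hb', inner_self_eq_norm_sq_to_K, hb]

theorem norm_add_ofReal_smul_sq {k q : E} (h : inner ℂ k q = 0) (r : ℝ) :
    ‖k + (r : ℂ) • q‖ ^ 2 = ‖k‖ ^ 2 + r ^ 2 * ‖q‖ ^ 2 := by
  have := norm_add_sq_eq_norm_sq_add_norm_sq_of_inner_eq_zero (𝕜 := ℂ) k ((r : ℂ) • q)
    (by rw [inner_smul_right, h, mul_zero])
  rw [norm_smul, Complex.norm_real, Real.norm_eq_abs] at this
  simp only [sq, this, ← abs_mul_abs_self r]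
  ring

theorem inner_ofReal_smul_add_ofReal_smul {a b : E} (ha : ‖a‖ = 1) (hb : ‖b‖ = 1)
    (hab : inner ℂ a b = 0) (α β γ δ : ℝ) :
    inner ℂ ((α : ℂ) • a + (β : ℂ) • b) ((γ : ℂ) • a + (δ : ℂ) • b) =
      ((α * γ + β * δ : ℝ) : ℂ) := by
  simp only [inner_add_left, inner_add_right, inner_smul_left, inner_smul_right, hab,
    inner_eq_zero_symm.1 hab, inner_self_eq_norm_sq_to_K, ha, hb, Complex.conj_ofReal]
  push_cast
  ring

theorem norm_ofReal_smul_add_ofReal_smul {a b : E} (ha : ‖a‖ = 1) (hb : ‖b‖ = 1)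
    (hab : inner ℂ a b = 0) {α β : ℝ} (h : α ^ 2 + β ^ 2 = 1) :
    ‖(α : ℂ) • a + (β : ℂ) • b‖ = 1 := by
  rw [norm_eq_sqrt_re_inner (𝕜 := ℂ), inner_ofReal_smul_add_ofReal_smul ha hb hab]
  simp [← sq, h]

end ComplexInnerProductSpace

theorem sq_mul_sqrt_div_mul_le {t Q Wr ε : ℝ} (ht : t ^ 2 ≤ 1) (hQ0 : 0 ≤ Q) (hQ : Q ≤ Wr) :
    (t * (Real.sqrt Wr / ε)) ^ 2 * Q ≤ (Wr / ε) ^ 2 := by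
  have hW : 0 ≤ Wr := hQ0.trans hQ
  rw [mul_pow, div_pow, Real.sq_sqrt hW]
  calc t ^ 2 * (Wr / ε ^ 2) * Q ≤ 1 * (Wr / ε ^ 2) * Wr := by gcongr
    _ = (Wr / ε) ^ 2 := by ring

namespace AdiaConvert

theorem hasDerivAt_θ (t : ℝ) : HasDerivAt θ (Real.pi / 2) t := by
  have h := ((hasDerivAt_id t).const_mul Real.pi).div_const 2
  simp only [id, mul_one] at h
  exact h

theorem ξ_eq (s : ℝ) : ξ s = Real.sin (Real.pi * s) := by
  rw [ξ, mul_assoc, mul_comm (Real.cos _), ← mul_assoc, ← Real.sin_two_mul, θ]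
  ring_nf

variable {Al V W X : Type*} {n : ℕ}

/-- `|0,φ⟩ ∈ H`. -/
def ket0 (φ : EuclideanSpace ℂ V) : Hsp Al V W n :=
  mk fun q => match q with
  | .inl (b, i) => if b = 0 then φ i else 0
  | .inr _ => 0

/-- `|1,φ⟩ ∈ H`. -/
def ket1 (φ : EuclideanSpace ℂ V) : Hsp Al V W n :=
  mk fun q => match q with
  | .inl (b, i) => if b = 0 then 0 else φ i
  | .inr _ => 0

section Rotation

variable (ρv σv : X → EuclideanSpace ℂ V) (s : ℝ) (x : X)

theorem kP_eq : (kP ρv σv s x : Hsp Al V W n) =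
    (Real.cos (θ s) : ℂ) • ket0 (ρv x) + (Real.sin (θ s) : ℂ) • ket1 (σv x) := by
  ext (⟨b, i⟩ | q) <;> simp [kP, ket0, ket1, mk]; split_ifs <;> simp

theorem kM_eq : (kM ρv σv s x : Hsp Al V W n) =
    ((-Real.sin (θ s) : ℝ) : ℂ) • ket0 (ρv x) + (Real.cos (θ s) : ℂ) • ket1 (σv x) := by
  ext (⟨b, i⟩ | q) <;> simp [kM, ket0, ket1, mk]; split_ifs <;> simp

end Rotation

variable [Fintype Al] [Fintype V] [Fintype W]

theorem norm_ket0 (φ : EuclideanSpace ℂ V) : ‖(ket0 φ : Hsp Al V W n)‖ = ‖φ‖ := by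
  simp [EuclideanSpace.norm_eq, ket0, mk, Fintype.sum_sum_type, Fintype.sum_prod_type]

theorem norm_ket1 (φ : EuclideanSpace ℂ V) : ‖(ket1 φ : Hsp Al V W n)‖ = ‖φ‖ := by
  simp [EuclideanSpace.norm_eq, ket1, mk, Fintype.sum_sum_type, Fintype.sum_prod_type]

theorem inner_ket0_ket1 (φ ψ : EuclideanSpace ℂ V) :
    inner ℂ (ket0 φ : Hsp Al V W n) (ket1 ψ) = 0 := by
  simp [ket0, ket1, mk, PiLp.inner_apply, Fintype.sum_sum_type, Fintype.sum_prod_type]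

section WorkSpace

variable (g : Al → Option Al → ℂ) (inp : X → Fin n → Al) (c : X → Fin n → EuclideanSpace ℂ W)
  (x : X)

theorem inner_ket0_qPart (φ : EuclideanSpace ℂ V) :
    inner ℂ (ket0 φ : Hsp Al V W n) (qPart g inp c x) = 0 := by
  simp [ket0, qPart, mk, PiLp.inner_apply, Fintype.sum_sum_type]

theorem inner_ket1_qPart (φ : EuclideanSpace ℂ V) :
    inner ℂ (ket1 φ : Hsp Al V W n) (qPart g inp c x) = 0 := by
  simp [ket1, qPart, mk, PiLp.inner_apply, Fintype.sum_sum_type]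

theorem norm_qPart_sq (hg : ∀ y, ∑ a, ‖g y a‖ ^ 2 = 1) :
    ‖(qPart g inp c x : Hsp Al V W n)‖ ^ 2 = ∑ i, ‖c x i‖ ^ 2 := by
  simp only [EuclideanSpace.norm_sq_eq, qPart, mk, Fintype.sum_sum_type, Fintype.sum_prod_type]
  simp [mul_pow, ← Finset.sum_mul_sum, hg]

theorem inner_kP_qPart (ρv σv : X → EuclideanSpace ℂ V) (s : ℝ) :
    inner ℂ (kP ρv σv s x : Hsp Al V W n) (qPart g inp c x) = 0 := by
  simp [kP_eq, inner_ket0_qPart, inner_ket1_qPart]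

theorem inner_kM_qPart (ρv σv : X → EuclideanSpace ℂ V) (s : ℝ) :
    inner ℂ (kM ρv σv s x : Hsp Al V W n) (qPart g inp c x) = 0 := by
  simp [kM_eq, inner_smul_left, inner_ket0_qPart, inner_ket1_qPart]

end WorkSpace

theorem sum_norm_gM_sq [DecidableEq Al] (y : Al) : ∑ a, ‖gM y a‖ ^ 2 = 1 := by
  simp [gM, Fintype.sum_option, apply_ite (fun z : ℂ => ‖z‖ ^ 2)]
  norm_num

section RotatingPair

variable {ρv σv : X → EuclideanSpace ℂ V} (s : ℝ) {x : X}

theorem hasDerivAt_kP :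
    HasDerivAt (fun t => (kP ρv σv t x : Hsp Al V W n))
      (((Real.pi / 2 : ℝ) : ℂ) • kM ρv σv s x) s := by
  simp only [kP_eq]
  have hc := (((Real.hasDerivAt_cos _).comp s (hasDerivAt_θ s)).ofReal_comp).smul_const
    (ket0 (ρv x) : Hsp Al V W n)
  have hs := (((Real.hasDerivAt_sin _).comp s (hasDerivAt_θ s)).ofReal_comp).smul_const
    (ket1 (σv x) : Hsp Al V W n)
  refine (hc.add hs).congr_deriv ?_
  rw [kM_eq]
  push_cast
  module

theorem hasDerivAt_kM :
    HasDerivAt (fun t => (kM ρv σv t x : Hsp Al V W n))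
      (((-(Real.pi / 2) : ℝ) : ℂ) • kP ρv σv s x) s := by
  simp only [kM_eq]
  have hc := (((Real.hasDerivAt_sin _).comp s (hasDerivAt_θ s)).neg.ofReal_comp).smul_const
    (ket0 (ρv x) : Hsp Al V W n)
  have hs := (((Real.hasDerivAt_cos _).comp s (hasDerivAt_θ s)).ofReal_comp).smul_const
    (ket1 (σv x) : Hsp Al V W n)
  refine (hc.add hs).congr_deriv ?_
  rw [kP_eq]
  push_cast
  module

variable (hρ : ‖ρv x‖ = 1) (hσ : ‖σv x‖ = 1)
include hρ hσ

theorem norm_kP : ‖(kP ρv σv s x : Hsp Al V W n)‖ = 1 := by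
  rw [kP_eq]
  exact norm_ofReal_smul_add_ofReal_smul (by rwa [norm_ket0]) (by rwa [norm_ket1])
    (inner_ket0_ket1 _ _) (Real.cos_sq_add_sin_sq _)

theorem norm_kM : ‖(kM ρv σv s x : Hsp Al V W n)‖ = 1 := by
  rw [kM_eq]
  exact norm_ofReal_smul_add_ofReal_smul (by rwa [norm_ket0]) (by rwa [norm_ket1])
    (inner_ket0_ket1 _ _) (by rw [neg_sq, Real.sin_sq_add_cos_sq])

theorem inner_kM_kP : inner ℂ (kM ρv σv s x : Hsp Al V W n) (kP ρv σv s x) = 0 := by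
  rw [kM_eq, kP_eq, inner_ofReal_smul_add_ofReal_smul (by rwa [norm_ket0]) (by rwa [norm_ket1])
    (inner_ket0_ket1 _ _)]
  simp; ring

end RotatingPair

/-- `∂ₛ|Ψ_x⁻(s,ε)⟩`, written with `ξ(s) = sin(πs)`. -/
def dPsiM [DecidableEq Al] (ρv σv : X → EuclideanSpace ℂ V) (inp : X → Fin n → Al)
    (v : X → Fin n → EuclideanSpace ℂ W) (Wr s ε : ℝ) (x : X) : Hsp Al V W n :=
  ((-(Real.pi / 2) : ℝ) : ℂ) • kP ρv σv s x +
    ((Real.pi * (Real.cos (Real.pi * s) * (Real.sqrt Wr / ε)) : ℝ) : ℂ) • qPart gM inp v x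

/-- `∂ₛX_x(s,ε)`, by the product rule, using that `N_x(ε)` does not depend on `s`. -/
def dXx [DecidableEq Al] (ρv σv : X → EuclideanSpace ℂ V) (inp : X → Fin n → Al)
    (u v : X → Fin n → EuclideanSpace ℂ W) (Wr s ε : ℝ) (x : X) :
    Hsp Al V W n →L[ℂ] Hsp Al V W n :=
  ((Real.pi / (2 * ‖PsiP ρv σv inp u Wr s ε x‖) : ℝ) : ℂ) •
    (rankOne ℂ (PsiM ρv σv inp v Wr s ε x)
        (‖PsiP ρv σv inp u Wr s ε x‖⁻¹ • ((Real.pi / 2 : ℝ) : ℂ) • kM ρv σv s x) +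
      rankOne ℂ (dPsiM ρv σv inp v Wr s ε x) (psiP ρv σv inp u Wr s ε x))

section States

variable [DecidableEq Al] {ρv σv : X → EuclideanSpace ℂ V} {inp : X → Fin n → Al}
  {u v : X → Fin n → EuclideanSpace ℂ W} {Wr ε : ℝ} (s : ℝ) {x : X}

theorem hasDerivAt_PsiP :
    HasDerivAt (fun t => PsiP ρv σv inp u Wr t ε x) (((Real.pi / 2 : ℝ) : ℂ) • kM ρv σv s x) s :=
  (hasDerivAt_kP s).add_const _

theorem hasDerivAt_PsiM :
    HasDerivAt (fun t => PsiM ρv σv inp v Wr t ε x) (dPsiM ρv σv inp v Wr s ε x) s := by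
  have hξ : HasDerivAt ξ (Real.pi * Real.cos (Real.pi * s)) s := by
    rw [show ξ = fun t => Real.sin (Real.pi * t) from funext ξ_eq]
    simpa [mul_comm] using ((hasDerivAt_id s).const_mul Real.pi).sin
  exact (hasDerivAt_kM s).add ((hξ.mul_const (Real.sqrt Wr / ε)).ofReal_comp.smul_const _
    |>.congr_deriv (by push_cast; ring_nf))

theorem norm_qPart_gM_sq_le (hv : ∑ i, ‖v x i‖ ^ 2 ≤ Wr) :
    ‖(qPart gM inp v x : Hsp Al V W n)‖ ^ 2 ≤ Wr := by
  rwa [norm_qPart_sq _ _ _ _ sum_norm_gM_sq]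

variable (hρ : ‖ρv x‖ = 1) (hσ : ‖σv x‖ = 1)
include hρ hσ

theorem norm_PsiP_sq : ‖PsiP ρv σv inp u Wr s ε x‖ ^ 2 =
    1 + (ε / Real.sqrt Wr) ^ 2 * ‖(qPart gP inp u x : Hsp Al V W n)‖ ^ 2 := by
  rw [PsiP, norm_add_ofReal_smul_sq (inner_kP_qPart _ _ _ _ _ _ _), norm_kP s hρ hσ, one_pow]

theorem norm_PsiP_eq (t : ℝ) : ‖PsiP ρv σv inp u Wr t ε x‖ = ‖PsiP ρv σv inp u Wr s ε x‖ :=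
  (sq_eq_sq₀ (norm_nonneg _) (norm_nonneg _)).1 <| by
    rw [norm_PsiP_sq t hρ hσ, norm_PsiP_sq s hρ hσ]

theorem one_le_norm_PsiP : 1 ≤ ‖PsiP ρv σv inp u Wr s ε x‖ :=
  (one_le_sq_iff₀ (norm_nonneg _)).1 <| by
    rw [norm_PsiP_sq s hρ hσ]
    exact le_add_of_nonneg_right (by positivity)

theorem norm_psiP : ‖psiP ρv σv inp u Wr s ε x‖ = 1 := by
  have hN : 1 ≤ ‖PsiP ρv σv inp u Wr s ε x‖ := one_le_norm_PsiP s hρ hσ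
  rw [psiP, norm_smul, norm_inv, norm_norm, inv_mul_cancel₀ (by positivity)]

theorem inner_kM_psiP : inner ℂ (kM ρv σv s x) (psiP ρv σv inp u Wr s ε x) = 0 := by
  rw [psiP, PsiP, ← Complex.coe_smul, inner_smul_right, inner_add_right, inner_smul_right,
    inner_kM_kP s hρ hσ, inner_kM_qPart]
  simp

theorem hasDerivAt_psiP :
    HasDerivAt (fun t => psiP ρv σv inp u Wr t ε x)
      (‖PsiP ρv σv inp u Wr s ε x‖⁻¹ • ((Real.pi / 2 : ℝ) : ℂ) • kM ρv σv s x) s := by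
  have h : (fun t => psiP ρv σv inp u Wr t ε x) =
      fun t => ‖PsiP ρv σv inp u Wr s ε x‖⁻¹ • PsiP ρv σv inp u Wr t ε x :=
    funext fun t => by rw [psiP, norm_PsiP_eq s hρ hσ t]
  rw [h]
  exact (hasDerivAt_PsiP s).const_smul ‖PsiP ρv σv inp u Wr s ε x‖⁻¹

theorem hasDerivAt_Xx :
    HasDerivAt (fun t => Xx ρv σv inp u v Wr t ε x) (dXx ρv σv inp u v Wr s ε x) s := by
  have h : (fun t => Xx ρv σv inp u v Wr t ε x) = fun t =>
      ((Real.pi / (2 * ‖PsiP ρv σv inp u Wr s ε x‖) : ℝ) : ℂ) •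
        rankOne ℂ (PsiM ρv σv inp v Wr t ε x) (psiP ρv σv inp u Wr t ε x) :=
    funext fun t => by rw [Xx, norm_PsiP_eq s hρ hσ t]; rfl
  have hA : HasDerivAt (fun t => PsiM ρv σv inp v Wr t ε x) _ s := hasDerivAt_PsiM s
  have hB : HasDerivAt (fun t => psiP ρv σv inp u Wr t ε x) _ s := hasDerivAt_psiP s hρ hσ
  rw [h, dXx]
  exact (hA.rankOne hB).const_smul ((Real.pi / (2 * ‖PsiP ρv σv inp u Wr s ε x‖) : ℝ) : ℂ)

theorem norm_Xx : ‖Xx ρv σv inp u v Wr s ε x‖ =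
    Real.pi / (2 * ‖PsiP ρv σv inp u Wr s ε x‖) * ‖PsiM ρv σv inp v Wr s ε x‖ := by
  have hN : 1 ≤ ‖PsiP ρv σv inp u Wr s ε x‖ := one_le_norm_PsiP s hρ hσ
  rw [Xx, norm_smul, ketbra, ← rankOne_def, norm_rankOne, norm_psiP s hρ hσ, mul_one,
    Complex.norm_real, Real.norm_of_nonneg (by positivity)]

theorem norm_dXx_comp_Pproj : ‖(dXx ρv σv inp u v Wr s ε x).comp (Pproj ρv σv inp u Wr s ε x)‖ =
    Real.pi / (2 * ‖PsiP ρv σv inp u Wr s ε x‖) * ‖dPsiM ρv σv inp v Wr s ε x‖ := by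
  have hN : 1 ≤ ‖PsiP ρv σv inp u Wr s ε x‖ := one_le_norm_PsiP s hρ hσ
  have hkM : inner ℂ (‖PsiP ρv σv inp u Wr s ε x‖⁻¹ • ((Real.pi / 2 : ℝ) : ℂ) • kM ρv σv s x)
      (psiP ρv σv inp u Wr s ε x) = 0 := by
    rw [← Complex.coe_smul, inner_smul_left, inner_smul_left, inner_kM_psiP s hρ hσ]
    simp
  rw [dXx, Pproj, ketbra, ← rankOne_def, ContinuousLinearMap.smul_comp,
    rankOne_add_rankOne_comp_rankOne_self (norm_psiP s hρ hσ) hkM, norm_smul, norm_rankOne,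
    norm_psiP s hρ hσ, mul_one, Complex.norm_real, Real.norm_of_nonneg (by positivity)]

variable (hv : ∑ i, ‖v x i‖ ^ 2 ≤ Wr) (hε0 : 0 < ε) (hWε : ε / 2 ≤ Wr)
include hv hε0 hWε

theorem norm_PsiM_le : ‖PsiM ρv σv inp v Wr s ε x‖ ≤ Real.sqrt 5 * (Wr / ε) := by
  have hq : ‖(qPart gM inp v x : Hsp Al V W n)‖ ^ 2 ≤ Wr := norm_qPart_gM_sq_le hv
  have hξ := sq_mul_sqrt_div_mul_le (ε := ε) (t := ξ s)
    (by rw [ξ_eq]; exact Real.sin_sq_le_one _) (sq_nonneg _) hq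
  have hr : 1 / 2 ≤ Wr / ε := by rw [le_div_iff₀ hε0]; linarith
  refine (sq_le_sq₀ (norm_nonneg _) (mul_nonneg (by positivity) (by linarith))).1 ?_
  rw [PsiM, norm_add_ofReal_smul_sq (inner_kM_qPart _ _ _ _ _ _ _), norm_kM s hρ hσ, one_pow,
    mul_pow (Real.sqrt 5), Real.sq_sqrt (by norm_num)]
  nlinarith

theorem norm_dPsiM_le : ‖dPsiM ρv σv inp v Wr s ε x‖ ≤ Real.sqrt 2 * Real.pi * (Wr / ε) := by
  have hq : ‖(qPart gM inp v x : Hsp Al V W n)‖ ^ 2 ≤ Wr := norm_qPart_gM_sq_le hv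
  have hcos := sq_mul_sqrt_div_mul_le (ε := ε) (Real.cos_sq_le_one (Real.pi * s)) (sq_nonneg _) hq
  have hr : 1 / 2 ≤ Wr / ε := by rw [le_div_iff₀ hε0]; linarith
  have hr2 : 1 / 4 ≤ (Wr / ε) ^ 2 := by nlinarith
  have hk : inner ℂ (((-(Real.pi / 2) : ℝ) : ℂ) • kP ρv σv s x) (qPart gM inp v x) = 0 := by
    rw [inner_smul_left, inner_kP_qPart, mul_zero]
  refine (sq_le_sq₀ (norm_nonneg _) (mul_nonneg (by positivity) (by linarith))).1 ?_
  rw [dPsiM, norm_add_ofReal_smul_sq hk, norm_smul, norm_kP s hρ hσ, mul_one, Complex.norm_real,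
    Real.norm_eq_abs, sq_abs, mul_pow Real.pi, mul_assoc, mul_pow (Real.sqrt 2 * Real.pi),
    mul_pow (Real.sqrt 2), Real.sq_sqrt (by norm_num)]
  nlinarith [mul_le_mul_of_nonneg_left hcos (sq_nonneg Real.pi),
    mul_le_mul_of_nonneg_left hr2 (sq_nonneg Real.pi)]

end States

end AdiaConvert

theorem stmt19_general
    {Al V W : Type*} [Fintype Al] [DecidableEq Al] [Fintype V] [Fintype W]
    {n : ℕ} {X : Type*} (inp : X → Fin n → Al)
    (ρv σv : X → EuclideanSpace ℂ V)
    (hρ : ∀ x, ‖ρv x‖ = 1) (hσ : ∀ x, ‖σv x‖ = 1)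
    (Wr : ℝ)
    (u v : X → Fin n → EuclideanSpace ℂ W)
    (hv : ∀ x, ∑ i, ‖v x i‖ ^ 2 ≤ Wr)
    (ε : ℝ) (hε0 : 0 < ε)
    (hWε : ε / 2 ≤ Wr) :
    ∀ x : X, ∀ s ∈ Set.Icc (0:ℝ) 1,
      ‖Xx ρv σv inp u v Wr s ε x‖ ≤ Real.pi * Real.sqrt 5 / 2 * (Wr / ε) ∧
      ∃ X' : Hsp Al V W n →L[ℂ] Hsp Al V W n,
        HasDerivWithinAt (fun t => Xx ρv σv inp u v Wr t ε x) X' (Set.Icc 0 1) s ∧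
        ‖X'.comp (Pproj ρv σv inp u Wr s ε x)‖ ≤
          Real.pi ^ 2 / Real.sqrt 2 * (Wr / ε) := by
  intro x s _
  have hN : 1 ≤ ‖PsiP ρv σv inp u Wr s ε x‖ := one_le_norm_PsiP s (hρ x) (hσ x)
  refine ⟨?_, _, (hasDerivAt_Xx s (hρ x) (hσ x)).hasDerivWithinAt, ?_⟩
  · rw [norm_Xx s (hρ x) (hσ x)]
    calc Real.pi / (2 * ‖PsiP ρv σv inp u Wr s ε x‖) * ‖PsiM ρv σv inp v Wr s ε x‖
        ≤ Real.pi / (2 * 1) * (Real.sqrt 5 * (Wr / ε)) := by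
          gcongr
          exact norm_PsiM_le s (hρ x) (hσ x) (hv x) hε0 hWε
      _ = Real.pi * Real.sqrt 5 / 2 * (Wr / ε) := by ring
  · rw [norm_dXx_comp_Pproj s (hρ x) (hσ x)]
    calc Real.pi / (2 * ‖PsiP ρv σv inp u Wr s ε x‖) * ‖dPsiM ρv σv inp v Wr s ε x‖
        ≤ Real.pi / (2 * 1) * (Real.sqrt 2 * Real.pi * (Wr / ε)) := by
          gcongr
          exact norm_dPsiM_le s (hρ x) (hσ x) (hv x) hε0 hWε
      _ = Real.pi ^ 2 / Real.sqrt 2 * (Wr / ε) := by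
          field_simp
          rw [Real.sq_sqrt zero_le_two]

/-- assuming `W ≥ ε/2`, the operators `X_x(s,ε)` and
`(∂ₛX_x(s,ε))P_x(s,ε)` satisfy `‖X_x(s,ε)‖ ≤ (π√5/2)(W/ε)` and
`‖(∂ₛX_x(s,ε))P_x(s,ε)‖ ≤ (π²/√2)(W/ε)`. -/
theorem stmt19
    {Al V W : Type*} [Fintype Al] [DecidableEq Al] [Fintype V] [DecidableEq V]
    [Fintype W] [DecidableEq W]
    {n : ℕ} {X : Type*} [Fintype X] (inp : X → Fin n → Al)
    (ρv σv : X → EuclideanSpace ℂ V)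
    (hρ : ∀ x, ‖ρv x‖ = 1) (hσ : ∀ x, ‖σv x‖ = 1)
    (Wr : ℝ) (hW : 0 < Wr)
    (u v : X → Fin n → EuclideanSpace ℂ W)
    (hu : ∀ x, ∑ i, ‖u x i‖ ^ 2 ≤ Wr) (hv : ∀ x, ∑ i, ‖v x i‖ ^ 2 ≤ Wr)
    (hadv : ∀ x y : X,
      (inner ℂ (ρv x) (ρv y) : ℂ) - (inner ℂ (σv x) (σv y) : ℂ) =
        ∑ i ∈ Finset.univ.filter (fun i => inp x i ≠ inp y i),
          (inner ℂ (u x i) (v y i) : ℂ))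
    (ε : ℝ) (hε0 : 0 < ε) (hε1 : ε ≤ 1)
    (hWε : ε / 2 ≤ Wr) :
    ∀ x : X, ∀ s ∈ Set.Icc (0:ℝ) 1,
      ‖Xx ρv σv inp u v Wr s ε x‖ ≤ Real.pi * Real.sqrt 5 / 2 * (Wr / ε) ∧
      ∃ X' : Hsp Al V W n →L[ℂ] Hsp Al V W n,
        HasDerivWithinAt (fun t => Xx ρv σv inp u v Wr t ε x) X' (Set.Icc 0 1) s ∧
        ‖X'.comp (Pproj ρv σv inp u Wr s ε x)‖ ≤
          Real.pi ^ 2 / Real.sqrt 2 * (Wr / ε) :=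
  stmt19_general inp ρv σv hρ hσ Wr u v hv ε hε0 hWε
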